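/- arXiv:1401.1170 — 2 statements merged into one kernel-verified Lean document; each statement's English description precedes it below -/
import Mathlib

section
/- The function h(v) = I_0(1/2 + √v) defined for v ∈ (0, 1/4) is strictly convex; equivalently, viewed as a function of (u - 1/2)^2, the rate function I_0(u) is convex. -/
noncomputable def I0 (u : ℝ) : ℝ := (1/2) * (u * Real.log u + (1-u) * Real.log (1-u))

open Real Set

/-! Writing `s = √v`, the derivative of `v ↦ I0 (1/2 + √v)` is `L s / (4 s)` with
`L s = log (1/2 + s) - log (1/2 - s)`. Since `L 0 = 0` and `L` is strictly convex on `[0, 1/2)`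
(its derivative `2a / (a² - s²)`, `a = 1/2`, increases), the slope `L s / s` from the origin is
strictly increasing, hence so is the derivative. -/

theorem hasDerivAt_I0 {u : ℝ} (h₀ : u ≠ 0) (h₁ : u ≠ 1) :
    HasDerivAt I0 ((log u - log (1 - u)) / 2) u := by
  have h₁' : 1 - u ≠ 0 := sub_ne_zero.mpr (Ne.symm h₁)
  have hsub : HasDerivAt (fun x => (1 - x) * log (1 - x)) (-(log (1 - u) + 1)) u := by
    have h := (hasDerivAt_mul_log h₁').comp u ((hasDerivAt_id u).const_sub 1)
    exact h.congr_deriv (by simp only [mul_neg, mul_one])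
  exact (((hasDerivAt_mul_log h₀).add hsub).const_mul (1 / 2)).congr_deriv (by ring)

theorem hasDerivAt_log_add_sub_log_sub {a s : ℝ} (hp : a + s ≠ 0) (hm : a - s ≠ 0) :
    HasDerivAt (fun s => log (a + s) - log (a - s)) (2 * a / (a ^ 2 - s ^ 2)) s := by
  have h := (((hasDerivAt_id s).const_add a).log hp).sub (((hasDerivAt_id s).const_sub a).log hm)
  have hsq : a ^ 2 - s ^ 2 ≠ 0 := by
    rw [show a ^ 2 - s ^ 2 = (a + s) * (a - s) by ring]; exact mul_ne_zero hp hm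
  refine h.congr_deriv ?_
  simp only [id]
  field_simp
  ring

theorem strictConvexOn_log_add_sub_log_sub (a : ℝ) :
    StrictConvexOn ℝ (Ico 0 a) (fun s => log (a + s) - log (a - s)) := by
  have hderiv : ∀ s ∈ Ico 0 a, HasDerivAt (fun s => log (a + s) - log (a - s))
      (2 * a / (a ^ 2 - s ^ 2)) s := fun s ⟨hs₀, hsa⟩ =>
    hasDerivAt_log_add_sub_log_sub (by linarith) (by linarith)
  refine StrictMonoOn.strictConvexOn_of_deriv (convex_Ico 0 a)
    (fun s hs => (hderiv s hs).continuousAt.continuousWithinAt) ?_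
  rw [interior_Ico]
  refine StrictMonoOn.congr (f₁ := fun s => 2 * a / (a ^ 2 - s ^ 2)) ?_
    (fun s hs => ((hderiv s (Ioo_subset_Ico_self hs)).deriv).symm)
  intro s ⟨hs₀, hsa⟩ t ⟨ht₀, hta⟩ hst
  apply div_lt_div_of_pos_left <;> nlinarith

theorem strictMonoOn_log_add_sub_log_sub_div (a : ℝ) :
    StrictMonoOn (fun s => (log (a + s) - log (a - s)) / s) (Ioo 0 a) := by
  intro s ⟨hs₀, hsa⟩ t ⟨ht₀, hta⟩ hst
  have h := (strictConvexOn_log_add_sub_log_sub a).secant_strict_mono (a := 0)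
    ⟨le_rfl, hs₀.trans hsa⟩ ⟨hs₀.le, hsa⟩ ⟨ht₀.le, hta⟩ hs₀.ne' ht₀.ne' hst
  simpa using h

theorem hasDerivAt_I0_half_add_sqrt {v : ℝ} (hv₀ : 0 < v) (hv₁ : v ≠ 1 / 4) :
    HasDerivAt (fun v => I0 (1 / 2 + √v))
      ((log (1 / 2 + √v) - log (1 / 2 - √v)) / √v / 4) v := by
  have hs : 0 < √v := sqrt_pos.mpr hv₀
  have hs₁ : √v ≠ 1 / 2 := fun h => hv₁ (by rw [← sq_sqrt hv₀.le, h]; norm_num)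
  have h := (hasDerivAt_I0 (u := 1 / 2 + √v) (by positivity) (by contrapose! hs₁; linarith)).comp v
    ((hasDerivAt_sqrt hv₀.ne').const_add (1 / 2))
  refine h.congr_deriv ?_
  rw [show 1 - (1 / 2 + √v) = 1 / 2 - √v by ring]
  field_simp
  ring

/-- As a function of v = (u-1/2)^2, the rate function is strictly convex:
    h(v) = I_0(1/2 + √v) is strictly convex on (0,1/4). -/
theorem I0_convex_in_square :
    StrictConvexOn ℝ (Set.Ioo (0:ℝ) (1/4)) (fun v => I0 (1/2 + Real.sqrt v)) := by
  have hderiv : ∀ v ∈ Ioo (0 : ℝ) (1 / 4), HasDerivAt (fun v => I0 (1 / 2 + √v))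
      ((log (1 / 2 + √v) - log (1 / 2 - √v)) / √v / 4) v := fun v ⟨hv₀, hv₁⟩ =>
    hasDerivAt_I0_half_add_sqrt hv₀ hv₁.ne
  refine StrictMonoOn.strictConvexOn_of_deriv (convex_Ioo 0 (1 / 4))
    (fun v hv => (hderiv v hv).continuousAt.continuousWithinAt) ?_
  rw [interior_Ioo]
  refine StrictMonoOn.congr ?_ (fun v hv => ((hderiv v hv).deriv).symm)
  have hsqrt : MapsTo Real.sqrt (Ioo 0 (1 / 4)) (Ioo 0 (1 / 2)) := fun v ⟨hv₀, hv₁⟩ =>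
    ⟨sqrt_pos.mpr hv₀, by rw [sqrt_lt' one_half_pos]; linarith⟩
  intro v hv w hw hvw
  have hslope := strictMonoOn_log_add_sub_log_sub_div (1 / 2) (hsqrt hv) (hsqrt hw)
    (sqrt_lt_sqrt hv.1.le hvw)
  exact div_lt_div_of_pos_right hslope four_pos
end

section
/- Suppose μ, ν : ℝ → ℝ are twice differentiable functions of c with μ(1/2) = 0, ν(1/2) = ν₀ ≠ 0, ε + ν₀ ≠ 0, and the quantity T(c) = ε³ + ν(c)³ + (3/2)(ε + ν(c))μ(c)² is constant. Then ν'(1/2) = 0 and ν''(1/2) = -((ε + ν₀)/ν₀²) μ'(1/2)². -/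
/-!
Differentiating the conserved quantity `T(ν, μ) = ε³ + ν³ + (3/2)(ε + ν)μ²` along `c` gives
`(3ν² + (3/2)μ²) ν' + 3(ε + ν) μ μ' = 0` for every `c`. At `c = 1/2`, where `μ = 0`, this
reads `3ν₀² ν' = 0`. Differentiating once more, all terms carrying a factor `μ(1/2)` or
`ν'(1/2)` drop out and what remains is `3ν₀² ν'' + 3(ε + ν₀) μ'² = 0`.
-/

section

variable (ε : ℝ) {μ ν dμ dν : ℝ → ℝ} {μ' ν' dμ' dν' x : ℝ}

lemma hasDerivAt_constraint (hμ : HasDerivAt μ μ' x) (hν : HasDerivAt ν ν' x) :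
    HasDerivAt (fun c => ε ^ 3 + ν c ^ 3 + (3/2) * (ε + ν c) * μ c ^ 2)
      ((3 * ν x ^ 2 + (3/2) * μ x ^ 2) * ν' + 3 * (ε + ν x) * μ x * μ') x := by
  refine (((hν.pow 3).const_add (ε ^ 3)).add
    (((hν.const_add ε).const_mul (3/2)).mul (hμ.pow 2))).congr_deriv ?_
  simp only [Pi.pow_apply]
  push_cast
  ring

lemma hasDerivAt_constraint_deriv_of_eq_zero (hμ : HasDerivAt μ μ' x) (hν : HasDerivAt ν ν' x)
    (hdμ : HasDerivAt dμ dμ' x) (hdν : HasDerivAt dν dν' x) (hμx : μ x = 0) (hdνx : dν x = 0) :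
    HasDerivAt (fun c => (3 * ν c ^ 2 + (3/2) * μ c ^ 2) * dν c + 3 * (ε + ν c) * μ c * dμ c)
      (3 * ν x ^ 2 * dν' + 3 * (ε + ν x) * μ' * dμ x) x := by
  refine ((((hν.pow 2).const_mul 3).add ((hμ.pow 2).const_mul (3/2))).mul hdν).add
    ((((hν.const_add ε).const_mul 3).mul hμ).mul hdμ) |>.congr_deriv ?_
  simp only [Pi.add_apply, Pi.mul_apply, Pi.pow_apply, hμx, hdνx]
  ring

end

theorem constraint_derivatives_general (ε ν₀ : ℝ) (μ ν : ℝ → ℝ)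
    (hμ : ContDiff ℝ 2 μ) (hν : ContDiff ℝ 2 ν)
    (hμ0 : μ (1/2) = 0) (hν0 : ν (1/2) = ν₀) (hν₀ : ν₀ ≠ 0)
    (hconst : ∀ c : ℝ,
      ε ^ 3 + ν c ^ 3 + (3/2) * (ε + ν c) * μ c ^ 2
        = ε ^ 3 + ν₀ ^ 3 + (3/2) * (ε + ν₀) * μ (1/2) ^ 2) :
    deriv ν (1/2) = 0 ∧
    deriv (deriv ν) (1/2) = -((ε + ν₀) / ν₀ ^ 2) * (deriv μ (1/2)) ^ 2 := by
  have hμd := hμ.differentiable two_ne_zero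
  have hνd := hν.differentiable two_ne_zero
  set G : ℝ → ℝ := fun c =>
    (3 * ν c ^ 2 + (3/2) * μ c ^ 2) * deriv ν c + 3 * (ε + ν c) * μ c * deriv μ c
  have hG : G = fun _ => 0 := funext fun c =>
    (hasDerivAt_constraint ε (hμd c).hasDerivAt (hνd c).hasDerivAt).unique
      (funext hconst ▸ hasDerivAt_const c _)
  have hν'0 : deriv ν (1/2) = 0 := by
    have h := congrFun hG (1/2)
    simp only [G, hμ0, hν0] at h
    simpa [hν₀] using h
  refine ⟨hν'0, ?_⟩
  have h := (hasDerivAt_constraint_deriv_of_eq_zero ε (hμd _).hasDerivAt (hνd _).hasDerivAt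
    (hμ.differentiable_deriv_two _).hasDerivAt (hν.differentiable_deriv_two _).hasDerivAt
    hμ0 hν'0).unique (hG ▸ hasDerivAt_const _ _)
  rw [hν0] at h
  field_simp
  linear_combination h / 3

/-- If μ(1/2) = 0, ν(1/2) = ν₀ ≠ 0, ε + ν₀ ≠ 0, and
    T(c) = ε³ + ν(c)³ + (3/2)(ε+ν(c))μ(c)² is constant, then ν'(1/2) = 0 and
    ν''(1/2) = -((ε+ν₀)/ν₀²) μ'(1/2)². -/
theorem constraint_derivatives (ε ν₀ : ℝ) (μ ν : ℝ → ℝ)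
    (hμ : ContDiff ℝ 2 μ) (hν : ContDiff ℝ 2 ν)
    (hμ0 : μ (1/2) = 0) (hν0 : ν (1/2) = ν₀) (hν₀ : ν₀ ≠ 0) (hεν : ε + ν₀ ≠ 0)
    (hconst : ∀ c : ℝ,
      ε ^ 3 + ν c ^ 3 + (3/2) * (ε + ν c) * μ c ^ 2
        = ε ^ 3 + ν₀ ^ 3 + (3/2) * (ε + ν₀) * μ (1/2) ^ 2) :
    deriv ν (1/2) = 0 ∧
    deriv (deriv ν) (1/2) = -((ε + ν₀) / ν₀ ^ 2) * (deriv μ (1/2)) ^ 2 :=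
  constraint_derivatives_general ε ν₀ μ ν hμ hν hμ0 hν0 hν₀ hconst
end
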